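/- Let k ≥ 1 be an integer and set m := 3^k. Then there exists a nonzero integer a ∈ ℤ not divisible by 3 such that a/m ∈ 𝔉 and every HCF partial quotient of a/m has absolute value at most 8; that is, for every n ≥ 0 with T^n(a/m) ≠ 0 one has |[1/T^n(a/m)]| ≤ 8. -/

import Mathlib

open Complex

/-- The nearest Gaussian integer to a complex number, as a complex number. -/
noncomputable def nearestGaussian (z : ℂ) : ℂ :=
  (⌊z.re + 1 / 2⌋ : ℤ) + (⌊z.im + 1 / 2⌋ : ℤ) * I

/-- The fundamental domain `𝔉 = {z : [z] = 0}`. -/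
noncomputable def Fdom : Set ℂ := {z : ℂ | nearestGaussian z = 0}

/-- The complex Gauss map on the fundamental domain. -/
noncomputable def gaussT (z : ℂ) : ℂ :=
  if z = 0 then 0 else z⁻¹ - nearestGaussian z⁻¹

/-!
On real points of `𝔉` the Hurwitz algorithm is the nearest-integer continued fraction, so a
word `b₁ … bₙ` of integers with `|bᵢ| ≥ 3` (and a few words with digits `±2`) is exactly the digit
sequence of `1/(b₁ + 1/(b₂ + ⋯))`. Its denominator is the continuant `q(b₁ … bₙ)`, coprime to the
numerator, so it suffices to find words with digits of size at most `8` and continuant `±3^k`.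
These come from two folding identities for continuants (read off the matrix products
`∏ !![0, 1; 1, bᵢ]`):
`q(L, t, -Lʳᵉᵛ) = ±t q(L)²` and `q(M, a + 1, a - 1, Mʳᵉᵛ) = q(M, a)²`,
which pass from `3^k` to `3^(2k+1)` and `3^(2k)`. Starting from `3³, 3⁴, 3⁵` this reaches every
`k ≥ 3`, while keeping all digits in `[3, 8]` provided the two end digits stay in `[4, 7]`.
-/

open Matrix Set

noncomputable def cfValue : List ℤ → ℝ
  | [] => 0
  | b :: L => ((b : ℝ) + cfValue L)⁻¹

/-- The HCF digits of `cfValue L` are exactly the letters of `L`. -/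
def IsHurwitzWord : List ℤ → Prop
  | [] => True
  | b :: L => IsHurwitzWord L ∧ cfValue (b :: L) ≠ 0 ∧ cfValue (b :: L) ∈ Ico (-1 / 2 : ℝ) (1 / 2)

lemma cfValue_mem_Ico : ∀ {L : List ℤ}, IsHurwitzWord L → cfValue L ∈ Ico (-1 / 2 : ℝ) (1 / 2)
  | [], _ => by norm_num [cfValue]
  | _ :: _, h => h.2.2

lemma IsHurwitzWord.drop {L : List ℤ} (h : IsHurwitzWord L) (n : ℕ) : IsHurwitzWord (L.drop n) := by
  induction n generalizing L with
  | zero => exact h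
  | succ n ih =>
    cases L with
    | nil => exact h
    | cons b L => exact ih h.1

lemma IsHurwitzWord.cons_of_three_le_abs {b : ℤ} {L : List ℤ} (hL : IsHurwitzWord L)
    (hb : 3 ≤ |b|) :
    IsHurwitzWord (b :: L) := by
  obtain ⟨hlo, hhi⟩ := cfValue_mem_Ico hL
  have hb' : (3 : ℝ) ≤ |(b : ℝ)| := by exact_mod_cast hb
  have h2 : 2 < |(b : ℝ) + cfValue L| := by
    rcases le_abs'.mp hb' with h | h
    · exact lt_abs.mpr (Or.inr (by linarith))
    · exact lt_abs.mpr (Or.inl (by linarith))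
  have hsmall : |cfValue (b :: L)| < 1 / 2 := by
    rw [cfValue, abs_inv]
    exact inv_lt_of_inv_lt₀ (by norm_num) (by norm_num; linarith)
  obtain ⟨hlo', hhi'⟩ := abs_lt.mp hsmall
  refine ⟨hL, ?_, ⟨by linarith, hhi'⟩⟩
  exact inv_ne_zero (abs_pos.mp (by linarith))

lemma isHurwitzWord_of_three_le_abs {L : List ℤ} (h : ∀ b ∈ L, 3 ≤ |b|) : IsHurwitzWord L := by
  induction L with
  | nil => trivial
  | cons b L ih =>
    exact (ih fun x hx => h x (List.mem_cons_of_mem b hx)).cons_of_three_le_abs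
      (h b List.mem_cons_self)

lemma inv_ofReal_cfValue_cons (b : ℤ) (L : List ℤ) :
    ((cfValue (b :: L) : ℂ))⁻¹ = b + cfValue L := by
  rw [cfValue, ← ofReal_inv, inv_inv]
  push_cast
  rfl

lemma nearestGaussian_intCast_add_ofReal (b : ℤ) {t : ℝ} (ht : t ∈ Ico (-1 / 2 : ℝ) (1 / 2)) :
    nearestGaussian (b + t) = b := by
  have hfloor : ⌊t + 1 / 2⌋ = 0 := by
    rw [Int.floor_eq_zero_iff]
    constructor <;> linarith [ht.1, ht.2]
  simp only [nearestGaussian, add_re, add_im, intCast_re, intCast_im, ofReal_re, ofReal_im,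
    add_assoc, zero_add, Int.floor_intCast_add, hfloor]
  norm_num

lemma nearestGaussian_ofReal {t : ℝ} (ht : t ∈ Ico (-1 / 2 : ℝ) (1 / 2)) :
    nearestGaussian t = 0 := by
  simpa using nearestGaussian_intCast_add_ofReal 0 ht

lemma gaussT_cfValue_cons {b : ℤ} {L : List ℤ} (h : IsHurwitzWord (b :: L)) :
    gaussT (cfValue (b :: L)) = cfValue L := by
  rw [gaussT, if_neg (ofReal_ne_zero.mpr h.2.1), inv_ofReal_cfValue_cons,
    nearestGaussian_intCast_add_ofReal b (cfValue_mem_Ico h.1), add_sub_cancel_left]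

lemma gaussT_iterate_cfValue {L : List ℤ} (h : IsHurwitzWord L) (n : ℕ) :
    gaussT^[n] (cfValue L) = cfValue (L.drop n) := by
  induction L generalizing n with
  | nil =>
    have hfix : gaussT 0 = 0 := if_pos rfl
    simpa [cfValue] using Function.iterate_fixed hfix n
  | cons b L ih =>
    cases n with
    | zero => rfl
    | succ n => rw [Function.iterate_succ_apply, gaussT_cfValue_cons h, ih h.1]; rfl

lemma cfValue_mem_Fdom {L : List ℤ} (h : IsHurwitzWord L) : (cfValue L : ℂ) ∈ Fdom :=
  nearestGaussian_ofReal (cfValue_mem_Ico h)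

lemma norm_nearestGaussian_inv_gaussT_iterate_le {L : List ℤ} {B : ℤ} (h : IsHurwitzWord L)
    (hB : ∀ b ∈ L, |b| ≤ B) (n : ℕ) (hn : gaussT^[n] (cfValue L) ≠ 0) :
    ‖nearestGaussian (gaussT^[n] (cfValue L))⁻¹‖ ≤ B := by
  rw [gaussT_iterate_cfValue h] at hn ⊢
  have hdrop := h.drop n
  cases hd : L.drop n with
  | nil => simp [hd, cfValue] at hn
  | cons b R =>
    rw [hd] at hdrop
    rw [inv_ofReal_cfValue_cons, nearestGaussian_intCast_add_ofReal b (cfValue_mem_Ico hdrop.1),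
      norm_intCast]
    exact_mod_cast hB b (List.mem_of_mem_drop (hd ▸ List.mem_cons_self))

/-- The Möbius map `z ↦ 1 / (b + z)`, so that `cfValue L = cfNum L / cfDen L`. -/
def digitMatrix (b : ℤ) : Matrix (Fin 2) (Fin 2) ℤ := !![0, 1; 1, b]

def wordMatrix (L : List ℤ) : Matrix (Fin 2) (Fin 2) ℤ := (L.map digitMatrix).prod

def cfNum (L : List ℤ) : ℤ := wordMatrix L 0 1

def cfDen (L : List ℤ) : ℤ := wordMatrix L 1 1

@[simp] lemma wordMatrix_nil : wordMatrix [] = 1 := rfl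

@[simp] lemma cfNum_nil : cfNum [] = 0 := rfl

@[simp] lemma cfDen_nil : cfDen [] = 1 := rfl

lemma wordMatrix_cons (b : ℤ) (L : List ℤ) :
    wordMatrix (b :: L) = digitMatrix b * wordMatrix L := List.prod_cons

lemma wordMatrix_append (L M : List ℤ) : wordMatrix (L ++ M) = wordMatrix L * wordMatrix M := by
  simp [wordMatrix]

lemma wordMatrix_reverse (L : List ℤ) : wordMatrix L.reverse = (wordMatrix L)ᵀ := by
  have hsymm : transpose ∘ digitMatrix = digitMatrix := by
    funext b
    simp [digitMatrix, ← Matrix.ext_iff, Fin.forall_fin_two]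
  rw [wordMatrix, wordMatrix, transpose_list_prod, List.map_map, hsymm, List.map_reverse]

lemma wordMatrix_map_neg (L : List ℤ) :
    wordMatrix (L.map (- ·)) =
      (-1) ^ L.length • (!![1, 0; 0, -1] * wordMatrix L * !![1, 0; 0, -1]) := by
  induction L with
  | nil => simp [wordMatrix, ← Matrix.ext_iff, Fin.forall_fin_two]
  | cons b L ih =>
    rw [List.map_cons, wordMatrix_cons, wordMatrix_cons, ih, eta_fin_two (wordMatrix L)]
    simp [digitMatrix, pow_succ]
    ring_nf
    simp

@[simp] lemma cfNum_cons (b : ℤ) (L : List ℤ) : cfNum (b :: L) = cfDen L := by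
  simp [cfNum, cfDen, wordMatrix_cons, digitMatrix, Matrix.mul_apply, Fin.sum_univ_two]

@[simp] lemma cfDen_cons (b : ℤ) (L : List ℤ) : cfDen (b :: L) = cfNum L + b * cfDen L := by
  simp [cfNum, cfDen, wordMatrix_cons, digitMatrix, Matrix.mul_apply, Fin.sum_univ_two]

lemma isCoprime_cfNum_cfDen (L : List ℤ) : IsCoprime (cfNum L) (cfDen L) := by
  induction L with
  | nil => exact isCoprime_zero_left.mpr isUnit_one
  | cons b L ih => simpa using ih.symm.add_mul_right_right b

lemma cfValue_mul_cfDen {L : List ℤ} (h : IsHurwitzWord L) : cfValue L * cfDen L = cfNum L := by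
  induction L with
  | nil => simp [cfValue]
  | cons b L ih =>
    have hne : (b : ℝ) + cfValue L ≠ 0 := by simpa [cfValue] using h.2.1
    rw [cfValue, cfNum_cons, cfDen_cons]
    push_cast
    rw [← ih h.1]
    field_simp
    ring

lemma cfDen_append_cons_map_neg_reverse (L : List ℤ) (t : ℤ) :
    cfDen (L ++ t :: L.reverse.map (- ·)) = (-1) ^ L.length * t * cfDen L ^ 2 := by
  rw [cfDen, wordMatrix_append, wordMatrix_cons, wordMatrix_map_neg, wordMatrix_reverse,
    List.length_reverse, cfDen]
  simp [digitMatrix, Matrix.mul_apply, Fin.sum_univ_two, vecMul, dotProduct]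
  ring

lemma cfDen_append_add_one_sub_one_reverse (M : List ℤ) (a : ℤ) :
    cfDen (M ++ (a + 1) :: (a - 1) :: M.reverse) = cfDen (M ++ [a]) ^ 2 := by
  rw [cfDen, cfDen, wordMatrix_append, wordMatrix_cons, wordMatrix_cons, wordMatrix_reverse,
    wordMatrix_append, wordMatrix_cons, wordMatrix_nil, mul_one]
  simp [digitMatrix, Matrix.mul_apply, Fin.sum_univ_two, vecMul, dotProduct]
  ring

/-- The end digits lie in `[4, 7]` because folding turns them into the interior digits `c ± 1`
and `±c`, which must stay in `[3, 8]`. -/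
def HasFoldableWord (k : ℕ) : Prop :=
  ∃ a c : ℤ, ∃ M : List ℤ, |a| ∈ Icc 4 7 ∧ |c| ∈ Icc 4 7 ∧ (∀ b ∈ M, |b| ∈ Icc 3 8) ∧
    |cfDen (a :: M ++ [c])| = 3 ^ k

lemma hasFoldableWord_three : HasFoldableWord 3 :=
  ⟨4, -7, [], by norm_num, by norm_num, by simp, by norm_num⟩

lemma hasFoldableWord_four : HasFoldableWord 4 :=
  ⟨4, -5, [4], by norm_num, by norm_num, by norm_num, by norm_num⟩

lemma hasFoldableWord_five : HasFoldableWord 5 :=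
  ⟨5, -7, [-7], by norm_num, by norm_num, by norm_num, by norm_num⟩

lemma HasFoldableWord.two_mul {k : ℕ} (h : HasFoldableWord k) : HasFoldableWord (2 * k) := by
  obtain ⟨a, c, M, ha, hc, hM, hden⟩ := h
  refine ⟨a, a, M ++ (c + 1) :: (c - 1) :: M.reverse, ha, ha, ?_, ?_⟩
  · intro b hb
    simp only [List.mem_append, List.mem_cons, List.mem_reverse] at hb
    rcases hb with hb | rfl | rfl | hb
    · exact hM b hb
    · simp only [mem_Icc, le_abs', abs_le] at hc ⊢; omega
    · simp only [mem_Icc, le_abs', abs_le] at hc ⊢; omega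
    · exact hM b hb
  · have hshape : a :: (M ++ (c + 1) :: (c - 1) :: M.reverse) ++ [a]
        = (a :: M) ++ (c + 1) :: (c - 1) :: (a :: M).reverse := by simp
    rw [hshape, cfDen_append_add_one_sub_one_reverse, abs_pow, hden, ← pow_mul']

lemma HasFoldableWord.two_mul_add_one {k : ℕ} (h : HasFoldableWord k) :
    HasFoldableWord (2 * k + 1) := by
  obtain ⟨a, c, M, ha, hc, hM, hden⟩ := h
  have hc' : |c| ∈ Icc 3 8 := Icc_subset_Icc (by norm_num) (by norm_num) hc
  refine ⟨a, -a, M ++ c :: 3 :: -c :: M.reverse.map (- ·), ha, by rwa [abs_neg], ?_, ?_⟩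
  · intro b hb
    simp only [List.mem_append, List.mem_cons, List.mem_map, List.mem_reverse] at hb
    rcases hb with hb | rfl | rfl | rfl | ⟨x, hx, rfl⟩
    · exact hM b hb
    · exact hc'
    · norm_num
    · rwa [abs_neg]
    · rw [abs_neg]; exact hM x hx
  · have hshape : a :: (M ++ c :: 3 :: -c :: M.reverse.map (- ·)) ++ [-a]
        = (a :: M ++ [c]) ++ 3 :: (a :: M ++ [c]).reverse.map (- ·) := by simp
    rw [hshape, cfDen_append_cons_map_neg_reverse, abs_mul, abs_mul, abs_neg_one_pow, abs_pow, hden]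
    norm_num
    ring

lemma hasFoldableWord_of_three_le {k : ℕ} (hk : 3 ≤ k) : HasFoldableWord k := by
  induction k using Nat.strong_induction_on with
  | _ k ih =>
    obtain ⟨j, rfl | rfl⟩ := Nat.even_or_odd' k
    · rcases (by omega : j < 3 ∨ 3 ≤ j) with hj | hj
      · interval_cases j <;> first | omega | exact hasFoldableWord_four
      · exact (ih j (by omega) hj).two_mul
    · rcases (by omega : j < 3 ∨ 3 ≤ j) with hj | hj
      · interval_cases j
        · omega
        · exact hasFoldableWord_three
        · exact hasFoldableWord_five
      · exact (ih j (by omega) hj).two_mul_add_one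

lemma exists_isHurwitzWord_abs_cfDen_eq {k : ℕ} (hk : 1 ≤ k) :
    ∃ L : List ℤ, IsHurwitzWord L ∧ (∀ b ∈ L, |b| ≤ 8) ∧ |cfDen L| = 3 ^ k := by
  obtain rfl | rfl | hk3 : k = 1 ∨ k = 2 ∨ 3 ≤ k := by omega
  · exact ⟨[3], by norm_num [IsHurwitzWord, cfValue], by simp, by simp⟩
  · exact ⟨[5, -2], by norm_num [IsHurwitzWord, cfValue], by norm_num, by norm_num⟩
  · obtain ⟨a, c, M, ha, hc, hM, hden⟩ := hasFoldableWord_of_three_le hk3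
    have hdigits : ∀ b ∈ a :: M ++ [c], |b| ∈ Icc 3 8 := by
      intro b hb
      simp only [List.mem_append, List.mem_cons, List.not_mem_nil, or_false] at hb
      rcases hb with (rfl | hb) | rfl
      · exact Icc_subset_Icc (by norm_num) (by norm_num) ha
      · exact hM b hb
      · exact Icc_subset_Icc (by norm_num) (by norm_num) hc
    exact ⟨_, isHurwitzWord_of_three_le_abs fun b hb => (hdigits b hb).1,
      fun b hb => (hdigits b hb).2, hden⟩

lemma exists_int_div_three_pow_eq_cfValue {L : List ℤ} {k : ℕ} (hL : IsHurwitzWord L) (hk : 1 ≤ k)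
    (hden : |cfDen L| = 3 ^ k) : ∃ a : ℤ, ¬ 3 ∣ a ∧ (a : ℝ) / 3 ^ k = cfValue L := by
  have h3den : 3 ∣ cfDen L := (dvd_abs _ _).mp (hden ▸ dvd_pow_self 3 (by omega))
  have h3num : ¬ 3 ∣ cfNum L := fun h3num => by
    have := (isCoprime_cfNum_cfDen L).isUnit_of_dvd' h3num h3den
    norm_num [Int.isUnit_iff] at this
  have hval : cfValue L = cfNum L / cfDen L := by
    have : cfDen L ≠ 0 := abs_ne_zero.mp (by rw [hden]; positivity)
    rw [eq_div_iff (by exact_mod_cast this), cfValue_mul_cfDen hL]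
  rcases (abs_eq (by positivity)).mp hden with h | h
  · exact ⟨cfNum L, h3num, by rw [hval, h]; push_cast; rfl⟩
  · exact ⟨-cfNum L, by rwa [dvd_neg], by rw [hval, h]; push_cast; rw [div_neg, neg_div]⟩

theorem stmt12 (k : ℕ) (hk : 1 ≤ k) :
    ∃ a : ℤ, a ≠ 0 ∧ ¬ (3 ∣ a) ∧
      ((a : ℂ) / ((3 : ℂ) ^ k)) ∈ Fdom ∧
      ∀ n : ℕ, gaussT^[n] ((a : ℂ) / ((3 : ℂ) ^ k)) ≠ 0 →
        ‖nearestGaussian (gaussT^[n] ((a : ℂ) / ((3 : ℂ) ^ k)))⁻¹‖ ≤ 8 := by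
  obtain ⟨L, hL, hdigits, hden⟩ := exists_isHurwitzWord_abs_cfDen_eq hk
  obtain ⟨a, ha, hval⟩ := exists_int_div_three_pow_eq_cfValue hL hk hden
  have hz : (a : ℂ) / (3 : ℂ) ^ k = cfValue L := by rw [← hval]; push_cast; rfl
  refine ⟨a, by rintro rfl; exact ha (dvd_zero 3), ha, hz ▸ cfValue_mem_Fdom hL, ?_⟩
  intro n hn
  rw [hz] at hn ⊢
  exact_mod_cast norm_nearestGaussian_inv_gaussT_iterate_le hL hdigits n hn
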